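/- In the normalized-basis setting of the model 𝒰_{2,s}: the kernel space Y := {η ∈ ℝ^{3s} : A(ζ₁,ζ₂,ζ₃,η) = 0 for all ζ₁,ζ₂,ζ₃} equals Span{v_1,...,v_s}, and its g-orthogonal complement Y^⊥ equals Span{t_1,...,t_s,v_1,...,v_s}. -/

import Mathlib

/-- `ℝ^{3s}` with coordinates `(u, t, v)`: for `a : V2 s`, `a.1` are the `u`-coordinates,
`a.2.1` the `t`-coordinates and `a.2.2` the `v`-coordinates. -/
abbrev V2 (s : ℕ) := (Fin s → ℝ) × (Fin s → ℝ) × (Fin s → ℝ)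

/-- The Euclidean dot product on `Fin s → ℝ`. -/
def dotp {s : ℕ} (x y : Fin s → ℝ) : ℝ := ∑ i, x i * y i

/-- The inner product of `𝒰_{2,s}`: `g(u_i,v_j) = δ_{ij}`, `g(t_i,t_j) = -δ_{ij}`. -/
def g2 {s : ℕ} (a b : V2 s) : ℝ := dotp a.1 b.2.2 + dotp a.2.2 b.1 - dotp a.2.1 b.2.1

/-- The multilinear extension (respecting the curvature symmetries) of the algebraic curvature
tensor whose only nonzero components up to the `ℤ₂` symmetries are
`A(u_i,u_j,u_k,t_l) = δ_{il}δ_{jk} - δ_{ik}δ_{jl}`. -/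
def A2 {s : ℕ} (a b c d : V2 s) : ℝ :=
    (dotp a.1 d.2.1 * dotp b.1 c.1 - dotp a.1 c.1 * dotp b.1 d.2.1)
  - (dotp a.1 c.2.1 * dotp b.1 d.1 - dotp a.1 d.1 * dotp b.1 c.2.1)
  + (dotp c.1 b.2.1 * dotp d.1 a.1 - dotp c.1 a.1 * dotp d.1 b.2.1)
  - (dotp c.1 a.2.1 * dotp d.1 b.1 - dotp c.1 b.1 * dotp d.1 a.2.1)

/-! `A(ζ₁,ζ₂,ζ₃,η)` only sees the `u`- and `t`-coordinates of `η`, and the test values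
`A(u_i,u_j,t_j,η) = η_{u_i}` and `A(u_i,u_j,u_j,η) = η_{t_i}`, for some `j ≠ i` (which exists as
`s ≥ 2`), recover both. So `Y = {u = 0, t = 0} = Span{v_i}`, and since `g(η, v_i) = η_{u_i}`,
`Y^⊥ = {u = 0} = Span{t_i, v_i}`. -/

theorem LinearMap.span_range_apply_single {R M ι : Type*} [Semiring R] [AddCommMonoid M]
    [Module R M] [Finite ι] [DecidableEq ι] (f : (ι → R) →ₗ[R] M) :
    Submodule.span R (Set.range fun i => f (Pi.single i 1)) = LinearMap.range f := by
  rw [LinearMap.range_eq_map, ← (Pi.basisFun R ι).span_eq, Submodule.map_span, ← Set.range_comp]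
  simp [Function.comp_def]

section Spans

variable {s : ℕ}

theorem coe_span_single_v :
    (Submodule.span ℝ (Set.range fun i : Fin s => ((0, 0, Pi.single i 1) : V2 s)) : Set (V2 s))
      = {η | η.1 = 0 ∧ η.2.1 = 0} := by
  have hv := (LinearMap.inr ℝ (Fin s → ℝ) _ ∘ₗ
    LinearMap.inr ℝ (Fin s → ℝ) (Fin s → ℝ)).span_range_apply_single
  simp only [LinearMap.coe_comp, Function.comp_apply, LinearMap.inr_apply] at hv
  rw [hv]
  ext ⟨u, t, v⟩
  simp [eq_comm, and_comm]

theorem coe_span_single_t_union_single_v :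
    (Submodule.span ℝ ((Set.range fun i : Fin s => ((0, Pi.single i 1, 0) : V2 s)) ∪
        (Set.range fun i : Fin s => ((0, 0, Pi.single i 1) : V2 s))) : Set (V2 s))
      = {η | η.1 = 0} := by
  have ht := (LinearMap.inr ℝ (Fin s → ℝ) _ ∘ₗ
    LinearMap.inl ℝ (Fin s → ℝ) (Fin s → ℝ)).span_range_apply_single
  have hv := (LinearMap.inr ℝ (Fin s → ℝ) _ ∘ₗ
    LinearMap.inr ℝ (Fin s → ℝ) (Fin s → ℝ)).span_range_apply_single
  simp only [LinearMap.coe_comp, Function.comp_apply, LinearMap.inr_apply, LinearMap.inl_apply]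
    at ht hv
  rw [Submodule.span_union, ht, hv, LinearMap.range_comp, LinearMap.range_comp,
    ← Submodule.map_sup, LinearMap.sup_range_inl_inr, ← LinearMap.range_eq_map,
    LinearMap.range_inr]
  rfl

end Spans

section Kernel

variable {s : ℕ}

@[simp] lemma dotp_zero_left (x : Fin s → ℝ) : dotp 0 x = 0 := by simp [dotp]

@[simp] lemma dotp_zero_right (x : Fin s → ℝ) : dotp x 0 = 0 := by simp [dotp]

@[simp] lemma dotp_single_left (i : Fin s) (x : Fin s → ℝ) : dotp (Pi.single i 1) x = x i := by
  simp [dotp, Pi.single_apply]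

@[simp] lemma dotp_single_right (i : Fin s) (x : Fin s → ℝ) : dotp x (Pi.single i 1) = x i := by
  simp [dotp, Pi.single_apply]

lemma A2_eq_zero_of_fst_eq_zero_of_snd_fst_eq_zero (a b c : V2 s) {η : V2 s} (hu : η.1 = 0)
    (ht : η.2.1 = 0) : A2 a b c η = 0 := by
  simp [A2, hu, ht]

lemma A2_u_u_t {i j : Fin s} (hij : i ≠ j) (η : V2 s) :
    A2 (Pi.single i 1, 0, 0) (Pi.single j 1, 0, 0) (0, Pi.single j 1, 0) η = η.1 i := by
  simp [A2, hij]

lemma A2_u_u_u {i j : Fin s} (hij : i ≠ j) (η : V2 s) :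
    A2 (Pi.single i 1, 0, 0) (Pi.single j 1, 0, 0) (Pi.single j 1, 0, 0) η = η.2.1 i := by
  simp [A2, hij]

lemma forall_A2_eq_zero_iff (hs : 2 ≤ s) (η : V2 s) :
    (∀ ζ₁ ζ₂ ζ₃ : V2 s, A2 ζ₁ ζ₂ ζ₃ η = 0) ↔ η.1 = 0 ∧ η.2.1 = 0 := by
  refine ⟨fun h => ?_, fun ⟨hu, ht⟩ a b c =>
    A2_eq_zero_of_fst_eq_zero_of_snd_fst_eq_zero a b c hu ht⟩
  have : Nontrivial (Fin s) := Fin.nontrivial_iff_two_le.mpr hs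
  constructor <;> funext i <;> obtain ⟨j, hji⟩ := exists_ne i
  · rw [← A2_u_u_t hji.symm η]; exact h _ _ _
  · rw [← A2_u_u_u hji.symm η]; exact h _ _ _

lemma g2_orthogonal_iff (η : V2 s) :
    (∀ ζ : V2 s, ζ.1 = 0 → ζ.2.1 = 0 → g2 η ζ = 0) ↔ η.1 = 0 := by
  refine ⟨fun h => funext fun i => ?_, fun hu ζ hζu hζt => by simp [g2, hu, hζu, hζt]⟩
  simpa [g2] using h (0, 0, Pi.single i 1) rfl rfl

end Kernel

/-- The kernel space `Y = {η : A(·,·,·,η) = 0}` equals `Span{v_1,...,v_s}` and its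
`g`-orthogonal complement equals `Span{t_1,...,t_s,v_1,...,v_s}`. -/
theorem stmt18 (s : ℕ) (hs : 2 ≤ s) :
    {η : V2 s | ∀ ζ₁ ζ₂ ζ₃ : V2 s, A2 ζ₁ ζ₂ ζ₃ η = 0}
      = (Submodule.span ℝ (Set.range fun i : Fin s => ((0, 0, Pi.single i 1) : V2 s)) :
          Set (V2 s)) ∧
    {η : V2 s | ∀ ζ : V2 s, (∀ ζ₁ ζ₂ ζ₃ : V2 s, A2 ζ₁ ζ₂ ζ₃ ζ = 0) → g2 η ζ = 0}
      = (Submodule.span ℝ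
          ((Set.range fun i : Fin s => ((0, Pi.single i 1, 0) : V2 s)) ∪
           (Set.range fun i : Fin s => ((0, 0, Pi.single i 1) : V2 s))) : Set (V2 s)) := by
  rw [coe_span_single_v, coe_span_single_t_union_single_v]
  constructor <;> ext η
  · exact forall_A2_eq_zero_iff hs η
  · simp only [Set.mem_ofPred_eq, forall_A2_eq_zero_iff hs, and_imp]
    exact g2_orthogonal_iff η
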